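/- Fix ρ > 0 and χ > 0. The sublevel set S = {(m, U) ∈ ℝⁿ × Sym₀ⁿ : λ_max((m⊗m)/ρ − U) ≤ χ/n} is a convex and compact subset of ℝⁿ × Sym₀ⁿ. -/

import Mathlib

open Matrix

noncomputable def lambdaMax {n : ℕ} (S : Matrix (Fin n) (Fin n) ℝ) : ℝ :=
  sSup {r : ℝ | ∃ v : Fin n → ℝ, (∑ i, v i ^ 2) = 1 ∧ r = v ⬝ᵥ S.mulVec v}

/-!
`λ_max(A) ≤ c` says exactly that `vᵀ A v ≤ c |v|²` for every `v`. For `A = m ⊗ m / ρ - U` this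
is a family of inequalities `(v ⬝ m)² / ρ - vᵀ U v ≤ c |v|²` whose left-hand sides are convex
and continuous in `(m, U)`, so the sublevel set is convex and closed. It is bounded because
`c • 1 - A` is positive semidefinite: its trace `n c - |m|² / ρ` is nonnegative, which bounds `m`,
and `U + c • 1 = (c • 1 - A) + m ⊗ m / ρ` is positive semidefinite of trace `n c`, which bounds
the entries of `U`.
-/

open Set

lemma isCompact_setOf_abs_le {ι κ : Type*} (a b : ℝ) :
    IsCompact {p : (ι → ℝ) × Matrix κ κ ℝ | (∀ i, |p.1 i| ≤ a) ∧ ∀ i j, |p.2 i j| ≤ b} := by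
  have hbox : {p : (ι → ℝ) × Matrix κ κ ℝ | (∀ i, |p.1 i| ≤ a) ∧ ∀ i j, |p.2 i j| ≤ b} =
      (univ.pi fun _ : ι => Icc (-a) a) ×ˢ
        (univ.pi fun _ : κ => univ.pi fun _ : κ => Icc (-b) b) := by
    ext p
    simp only [mem_ofPred_eq, abs_le]
    exact ⟨fun h => ⟨fun i _ => h.1 i, fun i _ j _ => h.2 i j⟩,
      fun h => ⟨fun i => h.1 i trivial, fun i j => h.2 i trivial j trivial⟩⟩
  rw [hbox]
  exact (isCompact_univ_pi fun _ => isCompact_Icc).prod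
    (isCompact_univ_pi fun _ => isCompact_univ_pi fun _ => isCompact_Icc)

section RealMatrix

variable {ι : Type*} [Fintype ι]

lemma dotProduct_smul_vecMulVec_sub_mulVec (ρ : ℝ) (m v : ι → ℝ) (U : Matrix ι ι ℝ) :
    v ⬝ᵥ (ρ⁻¹ • vecMulVec m m - U) *ᵥ v = ρ⁻¹ * (v ⬝ᵥ m) ^ 2 - v ⬝ᵥ U *ᵥ v := by
  simp [sub_mulVec, smul_mulVec, vecMulVec_mulVec, dotProduct_sub, dotProduct_smul,
    dotProduct_comm m v, sq]

lemma convexOn_sq_dotProduct_sub_dotProduct_mulVec {ρ : ℝ} (hρ : 0 ≤ ρ) (v : ι → ℝ) :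
    ConvexOn ℝ univ
      fun p : (ι → ℝ) × Matrix ι ι ℝ => ρ⁻¹ * (v ⬝ᵥ p.1) ^ 2 - v ⬝ᵥ p.2 *ᵥ v := by
  refine ⟨convex_univ, fun p _ q _ a b ha hb hab => ?_⟩
  obtain rfl : b = 1 - a := eq_sub_of_add_eq' hab
  simp only [Prod.fst_add, Prod.snd_add, Prod.smul_fst, Prod.smul_snd, dotProduct_add,
    dotProduct_smul, add_mulVec, smul_mulVec, smul_eq_mul]
  linear_combination mul_nonneg (inv_nonneg.2 hρ)
    (mul_nonneg (mul_nonneg ha hb) (sq_nonneg (v ⬝ᵥ p.1 - v ⬝ᵥ q.1)))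

lemma Matrix.PosSemidef.abs_apply_le_trace {B : Matrix ι ι ℝ} (hB : B.PosSemidef) (i j : ι) :
    |B i j| ≤ B.trace := by
  classical
  have hdiag (k : ι) : B k k ≤ B.trace :=
    Finset.single_le_sum (f := fun k => B k k) (fun k _ => hB.diag_nonneg) (Finset.mem_univ k)
  have hsymm : B j i = B i j := (isHermitian_iff_isSymm.1 hB.isHermitian).apply i j
  have htest (s : ℝ) : 0 ≤ B i i + 2 * s * B i j + s ^ 2 * B j j := by
    have := hB.dotProduct_mulVec_nonneg (Pi.single i 1 + Pi.single j s)
    simp [mulVec_add, mulVec_single, add_dotProduct, dotProduct_add, hsymm] at this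
    linear_combination this
  rw [abs_le]
  constructor <;> nlinarith [htest 1, htest (-1), hdiag i, hdiag j]

end RealMatrix

variable {n : ℕ}

lemma bddAbove_rayleigh (A : Matrix (Fin n) (Fin n) ℝ) :
    BddAbove {r : ℝ | ∃ v : Fin n → ℝ, (∑ i, v i ^ 2) = 1 ∧ r = v ⬝ᵥ A *ᵥ v} := by
  have hclosed : IsClosed {v : Fin n → ℝ | ∑ i, v i ^ 2 = 1} :=
    isClosed_eq (by fun_prop) continuous_const
  have hsphere := (isCompact_closedBall (0 : Fin n → ℝ) 1).of_isClosed_subset hclosed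
    fun v hv => by
      rw [mem_closedBall_zero_iff, pi_norm_le_iff_of_nonneg zero_le_one]
      intro i
      rw [Real.norm_eq_abs, ← sq_le_one_iff_abs_le_one, ← hv.out]
      exact Finset.single_le_sum (fun k _ => sq_nonneg (v k)) (Finset.mem_univ i)
  obtain ⟨b, hb⟩ := hsphere.bddAbove_image (f := fun v => v ⬝ᵥ A *ᵥ v)
    (by fun_prop : Continuous fun v : Fin n → ℝ => v ⬝ᵥ A *ᵥ v).continuousOn
  exact ⟨b, by rintro _ ⟨v, hv, rfl⟩; exact hb ⟨v, hv, rfl⟩⟩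

lemma lambdaMax_le_iff (hn : 0 < n) (A : Matrix (Fin n) (Fin n) ℝ) (c : ℝ) :
    lambdaMax A ≤ c ↔ ∀ v, v ⬝ᵥ A *ᵥ v ≤ c * (v ⬝ᵥ v) := by
  have hsum_sq (v : Fin n → ℝ) : ∑ i, v i ^ 2 = v ⬝ᵥ v := by
    simp [dotProduct, sq]
  constructor
  · intro h v
    rcases eq_or_ne v 0 with rfl | hv
    · simp
    have hvv : 0 < v ⬝ᵥ v := dotProduct_self_star_pos_iff.2 hv
    set t := √(v ⬝ᵥ v)
    have hnormalize (B : Matrix (Fin n) (Fin n) ℝ) :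
        (t⁻¹ • v) ⬝ᵥ B *ᵥ (t⁻¹ • v) = (v ⬝ᵥ B *ᵥ v) / (v ⬝ᵥ v) := by
      rw [mulVec_smul, dotProduct_smul, smul_dotProduct, smul_smul, smul_eq_mul, ← sq, inv_pow,
        Real.sq_sqrt hvv.le, inv_mul_eq_div]
    have hunit : ∑ i, (t⁻¹ • v) i ^ 2 = 1 := by
      have := hnormalize 1
      rwa [one_mulVec, one_mulVec, div_self hvv.ne', ← hsum_sq] at this
    have hA := (le_csSup (bddAbove_rayleigh A) ⟨_, hunit, rfl⟩).trans h
    rwa [hnormalize, div_le_iff₀ hvv] at hA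
  · intro h
    refine csSup_le ⟨_, Pi.single ⟨0, hn⟩ 1, by rw [hsum_sq]; simp, rfl⟩ ?_
    rintro _ ⟨v, hv, rfl⟩
    simpa [← hsum_sq, hv] using h v

lemma posSemidef_smul_one_sub_of_lambdaMax_le (hn : 0 < n) {A : Matrix (Fin n) (Fin n) ℝ}
    (hA : A.IsSymm) {c : ℝ} (h : lambdaMax A ≤ c) : (c • 1 - A).PosSemidef := by
  refine .of_dotProduct_mulVec_nonneg (isHermitian_iff_isSymm.2 ((isSymm_one.smul c).sub hA))
    fun v => ?_
  have := (lambdaMax_le_iff hn A c).1 h v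
  simp only [star_trivial, sub_mulVec, smul_mulVec, one_mulVec, dotProduct_sub, dotProduct_smul,
    smul_eq_mul]
  linarith

def lambdaMaxSublevelSet (ρ c : ℝ) : Set ((Fin n → ℝ) × Matrix (Fin n) (Fin n) ℝ) :=
  {p | p.2.IsSymm ∧ p.2.trace = 0 ∧ lambdaMax (ρ⁻¹ • vecMulVec p.1 p.1 - p.2) ≤ c}

lemma lambdaMaxSublevelSet_eq_inter_iInter (hn : 0 < n) (ρ c : ℝ) :
    lambdaMaxSublevelSet ρ c = {p | p.2.IsSymm ∧ p.2.trace = 0} ∩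
      ⋂ v : Fin n → ℝ, {p | ρ⁻¹ * (v ⬝ᵥ p.1) ^ 2 - v ⬝ᵥ p.2 *ᵥ v ≤ c * (v ⬝ᵥ v)} := by
  ext p
  simp only [lambdaMaxSublevelSet, mem_inter_iff, mem_iInter, mem_ofPred_eq,
    lambdaMax_le_iff hn, dotProduct_smul_vecMulVec_sub_mulVec, and_assoc]

lemma convex_lambdaMaxSublevelSet (hn : 0 < n) {ρ : ℝ} (hρ : 0 ≤ ρ) (c : ℝ) :
    Convex ℝ (lambdaMaxSublevelSet (n := n) ρ c) := by
  rw [lambdaMaxSublevelSet_eq_inter_iInter hn]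
  refine .inter (fun p hp q hq a b _ _ _ => ?_) (convex_iInter fun v => ?_)
  · exact ⟨(hp.1.smul a).add (hq.1.smul b), by simp [trace_add, trace_smul, hp.2, hq.2]⟩
  · simpa using (convexOn_sq_dotProduct_sub_dotProduct_mulVec hρ v).convex_le (c * (v ⬝ᵥ v))

lemma isClosed_lambdaMaxSublevelSet (hn : 0 < n) (ρ c : ℝ) :
    IsClosed (lambdaMaxSublevelSet (n := n) ρ c) := by
  rw [lambdaMaxSublevelSet_eq_inter_iInter hn]
  refine .inter (.inter (isClosed_eq (by fun_prop) (by fun_prop))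
    (isClosed_eq (by fun_prop) continuous_const))
    (isClosed_iInter fun v => isClosed_le ?_ continuous_const)
  fun_prop

section Bounds

variable {ρ c : ℝ} {p : (Fin n → ℝ) × Matrix (Fin n) (Fin n) ℝ}

lemma posSemidef_of_mem_lambdaMaxSublevelSet (hn : 0 < n) (hp : p ∈ lambdaMaxSublevelSet ρ c) :
    (c • 1 - (ρ⁻¹ • vecMulVec p.1 p.1 - p.2)).PosSemidef :=
  posSemidef_smul_one_sub_of_lambdaMax_le hn
    ((IsSymm.smul (transpose_vecMulVec p.1 p.1) ρ⁻¹).sub hp.1) hp.2.2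

lemma dotProduct_self_le_of_mem_lambdaMaxSublevelSet (hn : 0 < n) (hρ : 0 < ρ)
    (hp : p ∈ lambdaMaxSublevelSet ρ c) : p.1 ⬝ᵥ p.1 ≤ ρ * (n * c) := by
  have := (posSemidef_of_mem_lambdaMaxSublevelSet hn hp).trace_nonneg
  rw [trace_sub, trace_sub, trace_smul, trace_smul, trace_one, trace_vecMulVec, hp.2.1,
    Fintype.card_fin, smul_eq_mul, smul_eq_mul] at this
  rw [← inv_mul_le_iff₀ hρ]
  linarith

lemma abs_fst_apply_le_of_mem_lambdaMaxSublevelSet (hn : 0 < n) (hρ : 0 < ρ)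
    (hp : p ∈ lambdaMaxSublevelSet ρ c) (i : Fin n) : |p.1 i| ≤ √(ρ * (n * c)) := by
  have hsq : p.1 i ^ 2 ≤ p.1 ⬝ᵥ p.1 := by
    simpa [dotProduct, sq] using Finset.single_le_sum (f := fun k => p.1 k * p.1 k)
      (fun k _ => mul_self_nonneg _) (Finset.mem_univ i)
  exact Real.abs_le_sqrt (hsq.trans (dotProduct_self_le_of_mem_lambdaMaxSublevelSet hn hρ hp))

lemma abs_snd_apply_le_of_mem_lambdaMaxSublevelSet (hn : 0 < n) (hρ : 0 ≤ ρ)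
    (hp : p ∈ lambdaMaxSublevelSet ρ c) (i j : Fin n) : |p.2 i j| ≤ n * c + |c| := by
  have hB : (p.2 + c • 1).PosSemidef := by
    convert (posSemidef_of_mem_lambdaMaxSublevelSet hn hp).add
      ((posSemidef_vecMulVec_self_star p.1).smul (inv_nonneg.2 hρ)) using 1
    simp only [star_trivial]
    abel
  have htrace : (p.2 + c • 1).trace = n * c := by
    simp [trace_add, trace_smul, hp.2.1, mul_comm]
  have hone : |(c • (1 : Matrix (Fin n) (Fin n) ℝ)) i j| ≤ |c| := by
    by_cases h : i = j <;> simp [one_apply, h]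
  calc |p.2 i j| = |(p.2 + c • 1) i j - (c • (1 : Matrix (Fin n) (Fin n) ℝ)) i j| := by simp
    _ ≤ |(p.2 + c • 1) i j| + |(c • (1 : Matrix (Fin n) (Fin n) ℝ)) i j| := abs_sub _ _
    _ ≤ n * c + |c| := add_le_add (htrace ▸ hB.abs_apply_le_trace i j) hone

end Bounds

lemma isCompact_lambdaMaxSublevelSet (hn : 0 < n) {ρ : ℝ} (hρ : 0 < ρ) (c : ℝ) :
    IsCompact (lambdaMaxSublevelSet (n := n) ρ c) :=
  (isCompact_setOf_abs_le _ _).of_isClosed_subset (isClosed_lambdaMaxSublevelSet hn ρ c)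
    fun _ hp => ⟨abs_fst_apply_le_of_mem_lambdaMaxSublevelSet hn hρ hp,
      abs_snd_apply_le_of_mem_lambdaMaxSublevelSet hn hρ.le hp⟩

theorem stmt_5_general {n : ℕ} (hn : 0 < n) (ρ χ : ℝ) (hρ : 0 < ρ) :
    let S : Set ((Fin n → ℝ) × Matrix (Fin n) (Fin n) ℝ) :=
      {p | p.2.IsSymm ∧ p.2.trace = 0 ∧
           lambdaMax (ρ⁻¹ • vecMulVec p.1 p.1 - p.2) ≤ χ / n}
    Convex ℝ S ∧ IsCompact S :=
  ⟨convex_lambdaMaxSublevelSet hn hρ.le _, isCompact_lambdaMaxSublevelSet hn hρ _⟩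

theorem stmt_5 {n : ℕ} (hn : 0 < n) (ρ χ : ℝ) (hρ : 0 < ρ) (hχ : 0 < χ) :
    let S : Set ((Fin n → ℝ) × Matrix (Fin n) (Fin n) ℝ) :=
      {p | p.2.IsSymm ∧ p.2.trace = 0 ∧
           lambdaMax (ρ⁻¹ • vecMulVec p.1 p.1 - p.2) ≤ χ / n}
    Convex ℝ S ∧ IsCompact S :=
  stmt_5_general hn ρ χ hρ
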